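/- For every τ ≥ 0, the double integral ∫₀^∞∫₀^∞ y (y′)² exp(−(y² + y′²)/4 − (y y′/2) cosh τ) dy dy′ converges and equals √π / cosh⁴(τ/2). -/

import Mathlib

open MeasureTheory Real Set Filter
open scoped Nat

/-!
Write `c = cosh τ` and `q(t) = t² + 2ct + 1`. The exponent is symmetric in `(y, y′)`, so the
integral is half the integral of `y y′ (y + y′) e^{…}`. The substitution `y = t y′` (Jacobian
`y′`) turns the exponent into `-q(t) y′² / 4`, so the `y′`-integral is a Gaussian moment and the
symmetrised integral becomes `12 √π ∫₀^∞ t (1 + t) q(t)^{-5/2} dt`. This integrand has the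
primitive `(t³ + 3ct² - 3ct - 1) / (3 (c + 1)² q(t)^{3/2})`, regular at `c = 1` (unlike a primitive
of `t q(t)^{-5/2}` alone, which is why we symmetrise), so the symmetrised integral is
`8 √π / (1 + c)²`; finally `1 + cosh τ = 2 cosh² (τ / 2)`.
-/

theorem integrableOn_Ioi_pow_mul_exp_neg_mul_sq {b : ℝ} (hb : 0 < b) (n : ℕ) :
    IntegrableOn (fun s : ℝ => s ^ n * exp (-b * s ^ 2)) (Ioi 0) := by
  simpa only [rpow_natCast] using
    integrableOn_rpow_mul_exp_neg_mul_sq hb (s := n) (by linarith [n.cast_nonneg (α := ℝ)])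

theorem integral_Ioi_even_pow_mul_exp_neg_mul_sq {b : ℝ} (hb : 0 < b) (n : ℕ) :
    ∫ s in Ioi (0 : ℝ), s ^ (2 * n) * exp (-b * s ^ 2) =
      (2 * n - 1 : ℕ)‼ * √π / (2 ^ (n + 1) * b ^ n * √b) := by
  have h := integral_rpow_mul_exp_neg_mul_rpow two_pos
    (by linarith [(2 * n).cast_nonneg (α := ℝ)] : (-1 : ℝ) < (2 * n : ℕ)) hb
  simp only [rpow_natCast, rpow_two] at h
  rw [h, show (((2 * n : ℕ) : ℝ) + 1) / 2 = n + 1 / 2 by push_cast; ring, Gamma_nat_add_half,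
    show -(((2 * n : ℕ) : ℝ) + 1) / 2 = -(n + 1 / 2) by push_cast; ring, rpow_neg hb.le,
    rpow_add hb, rpow_natCast, ← sqrt_eq_rpow]
  field_simp
  ring

theorem integral_Ioi_pow_four_mul_exp_neg_div_four_mul_sq {q : ℝ} (hq : 0 < q) :
    ∫ s in Ioi (0 : ℝ), s ^ 4 * exp (-(q / 4) * s ^ 2) = 12 * √π / √q ^ 5 := by
  rw [show 4 = 2 * 2 from rfl, integral_Ioi_even_pow_mul_exp_neg_mul_sq (by positivity)]
  have hr0 : 0 < √q := sqrt_pos.2 hq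
  have hr := sq_sqrt hq.le
  norm_num [Nat.doubleFactorial]
  generalize √q = r at hr hr0 ⊢
  subst hr
  field_simp
  ring

theorem quadratic_pos_of_nonneg {c t : ℝ} (hc : -1 < c) (ht : 0 ≤ t) :
    0 < t ^ 2 + 2 * c * t + 1 := by
  rcases ht.eq_or_lt with rfl | ht
  · norm_num
  · nlinarith [sq_nonneg (t - 1), mul_pos ht (by linarith : 0 < c + 1)]

noncomputable def zarembaPrimitive (c t : ℝ) : ℝ :=
  (t ^ 3 + 3 * c * t ^ 2 - 3 * c * t - 1) / (3 * (c + 1) ^ 2 * √(t ^ 2 + 2 * c * t + 1) ^ 3)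

theorem hasDerivAt_zarembaPrimitive {c t : ℝ} (hc : c ≠ -1) (hq : 0 < t ^ 2 + 2 * c * t + 1) :
    HasDerivAt (zarembaPrimitive c) (t * (1 + t) / √(t ^ 2 + 2 * c * t + 1) ^ 5) t := by
  have hx := hasDerivAt_id' t
  have hP := (((hx.fun_pow 3).fun_add ((hx.fun_pow 2).const_mul (3 * c))).fun_sub
    (hx.const_mul (3 * c))).sub_const 1
  have hr := ((((hx.fun_pow 2).fun_add (hx.const_mul (2 * c))).add_const 1).sqrt hq.ne').fun_pow 3
  have hr0 : 0 < √(t ^ 2 + 2 * c * t + 1) := sqrt_pos.2 hq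
  have hc1 : c + 1 ≠ 0 := by contrapose! hc; linarith
  refine (hP.fun_div (hr.const_mul _) (by positivity)).congr_deriv ?_
  have hr2 := sq_sqrt hq.le
  generalize √(t ^ 2 + 2 * c * t + 1) = r at hr0 hr2 ⊢
  rw [div_eq_div_iff (by positivity) (by positivity)]
  norm_num
  field_simp
  linear_combination (t ^ 2 + 2 * c * t - c) * hr2

theorem tendsto_zarembaPrimitive_atTop {c : ℝ} (hc : c ≠ -1) :
    Tendsto (zarembaPrimitive c) atTop (nhds (1 / (3 * (c + 1) ^ 2))) := by
  have hc1 : c + 1 ≠ 0 := by contrapose! hc; linarith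
  let G (s : ℝ) : ℝ := (1 + 3 * c * s - 3 * c * s ^ 2 - s ^ 3) /
      (3 * (c + 1) ^ 2 * √(1 + 2 * c * s + s ^ 2) ^ 3)
  have hG : ContinuousAt G 0 := by fun_prop (disch := simp [hc1])
  have hG0 : G 0 = 1 / (3 * (c + 1) ^ 2) := by simp [G]
  rw [← hG0]
  refine (hG.tendsto.comp tendsto_inv_atTop_zero).congr' ?_
  filter_upwards [eventually_gt_atTop 0] with t ht
  have hsq : √(1 + 2 * c * t⁻¹ + t⁻¹ ^ 2) = √(t ^ 2 + 2 * c * t + 1) / t := by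
    rw [← sqrt_sq ht.le, ← sqrt_div' _ (sq_nonneg t), sqrt_sq ht.le]
    congr 1
    field_simp
  simp only [Function.comp_apply, G, hsq, zarembaPrimitive]
  field_simp

theorem integrableOn_Ioi_mul_one_add_div_sqrt_pow_five {c : ℝ} (hc : -1 < c) :
    IntegrableOn (fun t => t * (1 + t) / √(t ^ 2 + 2 * c * t + 1) ^ 5) (Ioi 0) :=
  integrableOn_Ioi_deriv_of_nonneg'
    (fun _ ht => hasDerivAt_zarembaPrimitive hc.ne' (quadratic_pos_of_nonneg hc ht))
    (fun t (ht : 0 < t) => by positivity) (tendsto_zarembaPrimitive_atTop hc.ne')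

theorem integral_Ioi_mul_one_add_div_sqrt_pow_five {c : ℝ} (hc : -1 < c) :
    ∫ t in Ioi (0 : ℝ), t * (1 + t) / √(t ^ 2 + 2 * c * t + 1) ^ 5 = 2 / (3 * (c + 1) ^ 2) := by
  rw [integral_Ioi_of_hasDerivAt_of_nonneg'
    (fun _ ht => hasDerivAt_zarembaPrimitive hc.ne' (quadratic_pos_of_nonneg hc ht))
    (fun t (ht : 0 < t) => by positivity) (tendsto_zarembaPrimitive_atTop hc.ne')]
  have hc1 : 0 < c + 1 := by linarith
  norm_num [zarembaPrimitive]
  field_simp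
  ring

def scaleBySnd (p : ℝ × ℝ) : ℝ × ℝ := (p.1 * p.2, p.2)

noncomputable def fderivScaleBySnd (p : ℝ × ℝ) : ℝ × ℝ →L[ℝ] ℝ × ℝ :=
  (Matrix.toLin (.finTwoProd ℝ) (.finTwoProd ℝ) !![p.2, p.1; 0, 1]).toContinuousLinearMap

theorem hasFDerivAt_scaleBySnd (p : ℝ × ℝ) :
    HasFDerivAt scaleBySnd (fderivScaleBySnd p) p := by
  rw [fderivScaleBySnd, Matrix.toLin_finTwoProd_toContinuousLinearMap]
  have hmul : HasFDerivAt (fun p : ℝ × ℝ => p.1 * p.2) _ p :=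
    (hasFDerivAt_fst (𝕜 := ℝ)).fun_mul hasFDerivAt_snd
  convert! hmul.prodMk (hasFDerivAt_snd (p := p)) using 2 <;> simp [add_comm]

theorem det_fderivScaleBySnd (p : ℝ × ℝ) : (fderivScaleBySnd p).det = p.2 := by
  simp only [fderivScaleBySnd, LinearMap.det_toContinuousLinearMap, LinearMap.det_toLin,
    Matrix.det_fin_two_of]
  ring

theorem scaleBySnd_image_Ioi_prod_Ioi :
    scaleBySnd '' (Ioi 0 ×ˢ Ioi 0) = Ioi 0 ×ˢ Ioi 0 := by
  ext ⟨y, s⟩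
  simp only [scaleBySnd, mem_image, mem_prod, mem_Ioi, Prod.exists, Prod.mk.injEq]
  constructor
  · rintro ⟨t, s, ⟨ht, hs⟩, rfl, rfl⟩
    exact ⟨mul_pos ht hs, hs⟩
  · rintro ⟨hy, hs⟩
    exact ⟨y / s, s, ⟨div_pos hy hs, hs⟩, div_mul_cancel₀ y hs.ne', rfl⟩

theorem injOn_scaleBySnd : InjOn scaleBySnd (Ioi 0 ×ˢ Ioi 0) := by
  rintro ⟨t, s⟩ ⟨-, hs⟩ ⟨t', s'⟩ - h
  simp only [scaleBySnd, Prod.mk.injEq] at h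
  obtain ⟨h1, rfl⟩ := h
  simp [mul_right_cancel₀ (ne_of_gt hs) h1]

section ChangeOfVariables

variable {E : Type*} [NormedAddCommGroup E] [NormedSpace ℝ E]

theorem integrableOn_comp_scaleBySnd_iff (f : ℝ × ℝ → E) :
    IntegrableOn (fun p => p.2 • f (scaleBySnd p)) (Ioi 0 ×ˢ Ioi 0) ↔
      IntegrableOn f (Ioi 0 ×ˢ Ioi 0) := by
  have h := integrableOn_image_iff_integrableOn_abs_det_fderiv_smul volume
    (measurableSet_Ioi.prod measurableSet_Ioi) (fun p _ => (hasFDerivAt_scaleBySnd p).hasFDerivWithinAt)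
    injOn_scaleBySnd f
  rw [scaleBySnd_image_Ioi_prod_Ioi] at h
  rw [h]
  refine integrableOn_congr_fun (fun p hp => ?_) (measurableSet_Ioi.prod measurableSet_Ioi)
  rw [det_fderivScaleBySnd, abs_of_pos hp.2]

theorem setIntegral_comp_scaleBySnd (f : ℝ × ℝ → E) :
    ∫ p in Ioi 0 ×ˢ Ioi 0, p.2 • f (scaleBySnd p) = ∫ p in Ioi 0 ×ˢ Ioi 0, f p := by
  have h := integral_image_eq_integral_abs_det_fderiv_smul volume
    (measurableSet_Ioi.prod measurableSet_Ioi) (fun p _ => (hasFDerivAt_scaleBySnd p).hasFDerivWithinAt)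
    injOn_scaleBySnd f
  rw [scaleBySnd_image_Ioi_prod_Ioi] at h
  rw [h]
  refine setIntegral_congr_fun (measurableSet_Ioi.prod measurableSet_Ioi) (fun p hp => ?_)
  rw [det_fderivScaleBySnd, abs_of_pos hp.2]

end ChangeOfVariables

theorem integrable_prod_of_nonneg {α β : Type*} [MeasurableSpace α] [MeasurableSpace β]
    {μ : Measure α} {ν : Measure β} [SFinite ν] {f : α × β → ℝ}
    (hf : AEStronglyMeasurable f (μ.prod ν)) (hf_nonneg : ∀ᵐ x ∂μ, ∀ y, 0 ≤ f (x, y))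
    (hf_slice : ∀ᵐ x ∂μ, Integrable (fun y => f (x, y)) ν)
    (hf_int : Integrable (fun x => ∫ y, f (x, y) ∂ν) μ) : Integrable f (μ.prod ν) := by
  refine (integrable_prod_iff hf).2 ⟨hf_slice, hf_int.congr ?_⟩
  filter_upwards [hf_nonneg] with x hx
  simp only [norm_of_nonneg (hx _)]

theorem volume_restrict_Ioi_prod_Ioi :
    (volume : Measure (ℝ × ℝ)).restrict (Ioi 0 ×ˢ Ioi 0) =
      (volume.restrict (Ioi 0)).prod (volume.restrict (Ioi 0)) := by
  rw [Measure.volume_eq_prod, Measure.prod_restrict]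

theorem setIntegral_add_comp_swap {α E : Type*} [MeasurableSpace α] [NormedAddCommGroup E]
    [NormedSpace ℝ E] {μ : Measure α} [SFinite μ] {s : Set α} {f : α × α → E}
    (hf : IntegrableOn f (s ×ˢ s) (μ.prod μ)) :
    ∫ p in s ×ˢ s, (f p + f p.swap) ∂μ.prod μ = 2 • ∫ p in s ×ˢ s, f p ∂μ.prod μ := by
  rw [integral_add hf (hf.swap : IntegrableOn (fun p => f p.swap) _ _), setIntegral_prod_swap,
    two_nsmul]

noncomputable def zarembaIntegrand (c : ℝ) (p : ℝ × ℝ) : ℝ :=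
  p.1 * p.2 ^ 2 * exp (-(p.1 ^ 2 + p.2 ^ 2) / 4 - p.1 * p.2 / 2 * c)

noncomputable def zarembaKernel (c : ℝ) (p : ℝ × ℝ) : ℝ :=
  p.1 * (1 + p.1) * (p.2 ^ 4 * exp (-((p.1 ^ 2 + 2 * c * p.1 + 1) / 4) * p.2 ^ 2))

theorem snd_smul_zarembaIntegrand_add_swap_scaleBySnd (c : ℝ) (p : ℝ × ℝ) :
    p.2 • (zarembaIntegrand c (scaleBySnd p) + zarembaIntegrand c (scaleBySnd p).swap) =
      zarembaKernel c p := by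
  obtain ⟨t, s⟩ := p
  simp only [zarembaIntegrand, zarembaKernel, scaleBySnd, Prod.swap, smul_eq_mul]
  rw [show -((t * s) ^ 2 + s ^ 2) / 4 - t * s * s / 2 * c =
      -((t ^ 2 + 2 * c * t + 1) / 4) * s ^ 2 by ring,
    show -(s ^ 2 + (t * s) ^ 2) / 4 - s * (t * s) / 2 * c =
      -((t ^ 2 + 2 * c * t + 1) / 4) * s ^ 2 by ring]
  ring

theorem integral_Ioi_zarembaKernel_slice {c t : ℝ} (hc : -1 < c) (ht : 0 < t) :
    ∫ s in Ioi (0 : ℝ), zarembaKernel c (t, s) =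
      12 * √π * (t * (1 + t) / √(t ^ 2 + 2 * c * t + 1) ^ 5) := by
  simp only [zarembaKernel]
  rw [integral_const_mul,
    integral_Ioi_pow_four_mul_exp_neg_div_four_mul_sq (quadratic_pos_of_nonneg hc ht.le)]
  ring

theorem integrableOn_zarembaKernel {c : ℝ} (hc : -1 < c) :
    IntegrableOn (zarembaKernel c) (Ioi 0 ×ˢ Ioi 0) := by
  rw [IntegrableOn, volume_restrict_Ioi_prod_Ioi]
  refine integrable_prod_of_nonneg
    (Continuous.aestronglyMeasurable (by unfold zarembaKernel; fun_prop)) ?_ ?_ ?_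
  · filter_upwards [ae_restrict_mem measurableSet_Ioi] with t (ht : 0 < t) s
    unfold zarembaKernel
    positivity
  · filter_upwards [ae_restrict_mem measurableSet_Ioi] with t (ht : 0 < t)
    simp only [zarembaKernel]
    exact (integrableOn_Ioi_pow_mul_exp_neg_mul_sq
      (div_pos (quadratic_pos_of_nonneg hc ht.le) four_pos) 4).const_mul _
  · exact IntegrableOn.congr_fun ((integrableOn_Ioi_mul_one_add_div_sqrt_pow_five hc).const_mul _)
      (fun t (ht : 0 < t) => (integral_Ioi_zarembaKernel_slice hc ht).symm) measurableSet_Ioi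

theorem setIntegral_zarembaKernel {c : ℝ} (hc : -1 < c) :
    ∫ p in Ioi (0 : ℝ) ×ˢ Ioi (0 : ℝ), zarembaKernel c p = 8 * √π / (c + 1) ^ 2 := by
  have hint := integrableOn_zarembaKernel hc
  rw [IntegrableOn, volume_restrict_Ioi_prod_Ioi] at hint
  rw [volume_restrict_Ioi_prod_Ioi, integral_prod _ hint,
    setIntegral_congr_fun measurableSet_Ioi
      (fun t (ht : 0 < t) => integral_Ioi_zarembaKernel_slice hc ht),
    integral_const_mul, integral_Ioi_mul_one_add_div_sqrt_pow_five hc]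
  have hc1 : 0 < c + 1 := by linarith
  field_simp
  ring

theorem integrableOn_zarembaIntegrand {c : ℝ} (hc : -1 < c) :
    IntegrableOn (zarembaIntegrand c) (Ioi 0 ×ˢ Ioi 0) := by
  have hsym : IntegrableOn (fun p => zarembaIntegrand c p + zarembaIntegrand c p.swap)
      (Ioi 0 ×ˢ Ioi 0) := by
    rw [← integrableOn_comp_scaleBySnd_iff]
    simpa only [snd_smul_zarembaIntegrand_add_swap_scaleBySnd] using integrableOn_zarembaKernel hc
  refine hsym.mono' (Continuous.aestronglyMeasurable (by unfold zarembaIntegrand; fun_prop)) ?_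
  filter_upwards [ae_restrict_mem (measurableSet_Ioi.prod measurableSet_Ioi)]
    with ⟨y, s⟩ ⟨hy, hs⟩
  rw [mem_Ioi] at hy hs
  have hswap_nonneg : 0 ≤ zarembaIntegrand c (s, y) := by unfold zarembaIntegrand; positivity
  rw [norm_of_nonneg (by unfold zarembaIntegrand; positivity)]
  exact le_add_of_nonneg_right hswap_nonneg

theorem setIntegral_zarembaIntegrand {c : ℝ} (hc : -1 < c) :
    ∫ p in Ioi (0 : ℝ) ×ˢ Ioi (0 : ℝ), zarembaIntegrand c p = 4 * √π / (c + 1) ^ 2 := by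
  have h := setIntegral_add_comp_swap (μ := volume) (s := Ioi (0 : ℝ))
    (integrableOn_zarembaIntegrand hc)
  rw [← Measure.volume_eq_prod, ← setIntegral_comp_scaleBySnd] at h
  simp only [snd_smul_zarembaIntegrand_add_swap_scaleBySnd, setIntegral_zarembaKernel hc,
    nsmul_eq_mul] at h
  linear_combination (-1 / 2 : ℝ) * h

theorem zaremba_double_integral_yy2_general (τ : ℝ) :
    IntegrableOn
      (fun p : ℝ × ℝ =>
        p.1 * p.2 ^ 2 * Real.exp (-(p.1 ^ 2 + p.2 ^ 2) / 4 - p.1 * p.2 / 2 * Real.cosh τ))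
      (Set.Ioi 0 ×ˢ Set.Ioi 0) ∧
    ∫ p in Set.Ioi (0 : ℝ) ×ˢ Set.Ioi (0 : ℝ),
        p.1 * p.2 ^ 2 * Real.exp (-(p.1 ^ 2 + p.2 ^ 2) / 4 - p.1 * p.2 / 2 * Real.cosh τ)
      = Real.sqrt π / (Real.cosh (τ / 2)) ^ 4 := by
  have hc : -1 < cosh τ := by linarith [one_le_cosh τ]
  have hcosh : cosh τ + 1 = 2 * cosh (τ / 2) ^ 2 := by
    have h := cosh_two_mul (τ / 2)
    rw [mul_div_cancel₀ τ two_ne_zero] at h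
    linarith [cosh_sq (τ / 2)]
  refine ⟨integrableOn_zarembaIntegrand hc, (setIntegral_zarembaIntegrand hc).trans ?_⟩
  rw [hcosh]
  have := cosh_pos (τ / 2)
  field_simp
  ring

/-- For every `τ ≥ 0`, the double integral
`∫₀^∞∫₀^∞ y (y′)² exp(−(y² + y′²)/4 − (y y′/2) cosh τ) dy dy′` converges and equals
`√π / cosh⁴(τ/2)`. -/
theorem zaremba_double_integral_yy2 (τ : ℝ) (hτ : 0 ≤ τ) :
    IntegrableOn
      (fun p : ℝ × ℝ =>
        p.1 * p.2 ^ 2 * Real.exp (-(p.1 ^ 2 + p.2 ^ 2) / 4 - p.1 * p.2 / 2 * Real.cosh τ))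
      (Set.Ioi 0 ×ˢ Set.Ioi 0) ∧
    ∫ p in Set.Ioi (0 : ℝ) ×ˢ Set.Ioi (0 : ℝ),
        p.1 * p.2 ^ 2 * Real.exp (-(p.1 ^ 2 + p.2 ^ 2) / 4 - p.1 * p.2 / 2 * Real.cosh τ)
      = Real.sqrt π / (Real.cosh (τ / 2)) ^ 4 :=
  zaremba_double_integral_yy2_general τ
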